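/- arXiv:2011.11605 — 5 statements merged into one kernel-verified Lean document; each statement's English description precedes it below -/
import Mathlib

section
/- Let k ≥ 1 and let w : A(K) → ℝ_{>0} be a positive arc-weighting of the complete digraph K on k+1 vertices (every ordered pair of distinct vertices is an arc). Then K contains k directed cycles C_1, ..., C_k whose total weights w(C_1), ..., w(C_k) are pairwise distinct. -/
/-- A directed cycle of length `n` in the digraph with arc relation `A`. -/
def IsDicycle {V : Type*} (A : V → V → Prop) (n : ℕ) (c : ℕ → V) : Prop :=
  2 ≤ n ∧ (∀ i, A (c i) (c (i + 1))) ∧ (∀ i, c (i + n) = c i) ∧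
    ∀ i j, i < n → j < n → c i = c j → i = j

/-!
Fix a vertex `v` and list the others as `v₁, …, v_k` so that `w (vⱼ, v)` is nondecreasing.
Passing from the cycle `v v₁ ⋯ vⱼ₋₁ v` to `v v₁ ⋯ vⱼ v` replaces the arc `vⱼ₋₁ → v` by
`vⱼ₋₁ → vⱼ → v`: a positive arc is added and the arc back to `v` gets no lighter, so the
weights of these `k` cycles strictly increase.
-/

open Finset

theorem isDicycle_ne_comp_mod {V : Type*} {f : ℕ → V} {n : ℕ} (hn : 2 ≤ n)
    (hf : Set.InjOn f (Set.Iio n)) : IsDicycle (· ≠ ·) n (fun i => f (i % n)) := by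
  have hmem : ∀ i, i % n ∈ Set.Iio n := fun i => Nat.mod_lt _ (by omega)
  have hsucc : ∀ i, (i + 1) % n ≠ i % n := fun i => by
    rw [Nat.add_mod, Nat.mod_eq_of_lt (by omega : 1 < n)]
    have : i % n < n := hmem i
    rcases Nat.lt_or_ge (i % n + 1) n with h | h
    · rw [Nat.mod_eq_of_lt h]; omega
    · rw [show i % n + 1 = n by omega, Nat.mod_self]; omega
  refine ⟨hn, fun i h => hsucc i (hf (hmem _) (hmem _) h).symm, fun i => by simp,
    fun i j hi hj h => ?_⟩
  simpa [Nat.mod_eq_of_lt hi, Nat.mod_eq_of_lt hj] using hf (hmem i) (hmem j) h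

theorem sum_range_succ_mod {M : Type*} [AddCommMonoid M] (F : ℕ → ℕ → M) (m : ℕ) :
    ∑ i ∈ range (m + 1), F (i % (m + 1)) ((i + 1) % (m + 1)) =
      ∑ i ∈ range m, F i (i + 1) + F m 0 := by
  rw [sum_range_succ, Nat.mod_self, Nat.mod_eq_of_lt (Nat.lt_succ_self m)]
  congr 1
  refine sum_congr rfl fun i hi => ?_
  rw [mem_range] at hi
  rw [Nat.mod_eq_of_lt (by omega), Nat.mod_eq_of_lt (by omega)]

theorem strictMonoOn_closedWalk_weight {V : Type*} {w : V → V → ℝ}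
    (hw : ∀ u v : V, u ≠ v → 0 < w u v) {f : ℕ → V} {n : ℕ}
    (hf : Set.InjOn f (Set.Iic n)) (hmono : MonotoneOn (fun m => w (f m) (f 0)) (Set.Icc 1 n)) :
    StrictMonoOn (fun m => ∑ i ∈ range m, w (f i) (f (i + 1)) + w (f m) (f 0))
      (Set.Icc 1 n) := by
  refine strictMonoOn_of_lt_add_one Set.ordConnected_Icc fun m _ hm hm' => ?_
  have harc : 0 < w (f m) (f (m + 1)) :=
    hw _ _ fun h => by have := hf hm.2 hm'.2 h; omega
  have hlast : w (f m) (f 0) ≤ w (f (m + 1)) (f 0) := hmono hm hm' (by omega)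
  simp only [sum_range_succ]
  linarith

theorem List.exists_perm_pairwise_comp_le {α β : Type*} [LinearOrder β] (l : List α)
    (κ : α → β) : ∃ L : List α, L.Perm l ∧ L.Pairwise (fun a b => κ a ≤ κ b) := by
  refine ⟨l.mergeSort (fun a b => decide (κ a ≤ κ b)), List.mergeSort_perm _ _, ?_⟩
  simpa using List.pairwise_mergeSort (le := fun a b => decide (κ a ≤ κ b))
    (fun a b c hab hbc => by simpa using le_trans (by simpa using hab) (by simpa using hbc))
    (fun a b => by simpa using le_total (κ a) (κ b)) l

theorem exists_enum_from_monotoneOn {V β : Type*} [Fintype V] [LinearOrder β] {n : ℕ}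
    (hcard : Fintype.card V = n + 1) (v : V) (κ : V → β) :
    ∃ f : ℕ → V, f 0 = v ∧ Set.InjOn f (Set.Iic n) ∧ MonotoneOn (κ ∘ f) (Set.Icc 1 n) := by
  classical
  obtain ⟨L, hperm, hsorted⟩ := (univ.erase v).toList.exists_perm_pairwise_comp_le κ
  have hnodup : (v :: L).Nodup := by
    refine List.nodup_cons.2 ⟨fun h => ?_, hperm.nodup_iff.2 (nodup_toList _)⟩
    simpa using hperm.mem_iff.1 h
  have hlen : L.length = n := by
    simp [hperm.length_eq, hcard]
  refine ⟨fun i => (v :: L).getD i v, rfl, fun a (ha : a ≤ n) b (hb : b ≤ n) h => ?_,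
    fun a ha b hb hab => ?_⟩
  · have ha' : a < (v :: L).length := by simp only [List.length_cons]; omega
    have hb' : b < (v :: L).length := by simp only [List.length_cons]; omega
    simp only [List.getD_eq_getElem _ _ ha', List.getD_eq_getElem _ _ hb'] at h
    exact hnodup.getElem_inj_iff.1 h
  · obtain ⟨a, rfl⟩ := Nat.exists_eq_add_of_le' ha.1
    obtain ⟨b, rfl⟩ := Nat.exists_eq_add_of_le' hb.1
    have hb' : b < L.length := by have := hb.2; omega
    rcases (Nat.le_of_succ_le_succ hab).eq_or_lt with rfl | hlt
    · rfl
    · simp only [Function.comp, List.getD_cons_succ, List.getD_eq_getElem _ _ hb',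
        List.getD_eq_getElem _ _ (hlt.trans hb')]
      exact List.pairwise_iff_getElem.1 hsorted _ _ _ _ hlt

theorem stmt5_general {V : Type*} [Fintype V] (k : ℕ)
    (hcard : Fintype.card V = k + 1)
    (w : V → V → ℝ) (hw : ∀ u v : V, u ≠ v → 0 < w u v) :
    ∃ (N : Fin k → ℕ) (c : Fin k → ℕ → V),
      (∀ j, IsDicycle (fun a b : V => a ≠ b) (N j) (c j)) ∧
      Function.Injective
        (fun j => ∑ i ∈ Finset.range (N j), w (c j i) (c j (i + 1))) := by
  obtain ⟨v⟩ : Nonempty V := Fintype.card_pos_iff.mp (by omega)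
  obtain ⟨f, rfl, hinj, hmono⟩ := exists_enum_from_monotoneOn hcard v (w · v)
  have hW := strictMonoOn_closedWalk_weight hw hinj hmono
  have hsub (j : Fin k) : Set.Iio (j + 1 + 1 : ℕ) ⊆ Set.Iic k := fun i (hi : i < j + 1 + 1) =>
    show i ≤ k by omega
  refine ⟨fun j => j + 1 + 1, fun j i => f (i % (j + 1 + 1)),
    fun j => isDicycle_ne_comp_mod (by simp) (hinj.mono (hsub j)), fun j₁ j₂ h => ?_⟩
  simp only [sum_range_succ_mod (fun a b => w (f a) (f b))] at h
  exact Fin.ext (by simpa using hW.injOn ⟨by omega, j₁.isLt⟩ ⟨by omega, j₂.isLt⟩ h)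

/-- Let `k ≥ 1` and let `w` be a positive arc-weighting of the complete
digraph on `k+1` vertices (arc relation `≠`).  Then there are `k` directed cycles
whose total weights are pairwise distinct. -/
theorem stmt5 {V : Type*} [Fintype V] (k : ℕ) (hk : 1 ≤ k)
    (hcard : Fintype.card V = k + 1)
    (w : V → V → ℝ) (hw : ∀ u v : V, u ≠ v → 0 < w u v) :
    ∃ (N : Fin k → ℕ) (c : Fin k → ℕ → V),
      (∀ j, IsDicycle (fun a b : V => a ≠ b) (N j) (c j)) ∧
      Function.Injective
        (fun j => ∑ i ∈ Finset.range (N j), w (c j i) (c j (i + 1))) :=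
  stmt5_general k hcard w hw
end

section
/- For every k ≥ 1, the digraph D_k constructed as follows is strongly k-vertex-connected: the vertex set is partitioned into 2N parts V_1, ..., V_{2N} each of size k (with N = 4^{k²}); D_k contains all arcs from V_ℓ to V_{ℓ−1} for 2 ≤ ℓ ≤ 2N; writing V_1 = {u_1,...,u_k} and V_{2N} = {w_1,...,w_k}, each u_i has k out-arcs to vertices in parts V_s with N+1 ≤ s ≤ 2N (one arc into each of k distinct parts), and each w_i has k in-arcs from vertices in parts V_s with 1 ≤ s ≤ N. Then for every set X of fewer than k vertices, D_k − X is strongly connected. -/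
/-- The digraph `D_k` is strongly `k`-vertex-connected.  Its vertex set
is partitioned into `2N` parts of size `k` (where `N = 4^(k²)`, parts indexed by
`Fin (2N)`); it contains all arcs from part `ℓ` to part `ℓ − 1`; every vertex of the
first part has `k` out-arcs to distinct vertices in the upper half of the parts; and
every vertex of the last part has `k` in-arcs from distinct vertices in the lower half
of the parts.  Then deleting any set of fewer than `k` vertices leaves the digraph
strongly connected. -/
theorem stmt11 (k : ℕ) (hk : 1 ≤ k) {V : Type*} [Fintype V]
    (N : ℕ) (hN : N = 4 ^ (k ^ 2))
    (part : V → Fin (2 * N))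
    (hpart : ∀ ℓ : Fin (2 * N), {v | part v = ℓ}.ncard = k)
    (A : V → V → Prop)
    (hback : ∀ u v : V, (part v : ℕ) + 1 = (part u : ℕ) → A u v)
    (hout : ∀ u : V, (part u : ℕ) = 0 → ∃ f : Fin k → V, Function.Injective f ∧
      ∀ j, A u (f j) ∧ N ≤ (part (f j) : ℕ))
    (hin : ∀ w : V, (part w : ℕ) = 2 * N - 1 → ∃ f : Fin k → V, Function.Injective f ∧
      ∀ j, A (f j) w ∧ (part (f j) : ℕ) < N) :
    ∀ X : Set V, X.ncard < k → ∀ x y : V, x ∉ X → y ∉ X →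
      Relation.ReflTransGen (fun a b => A a b ∧ a ∉ X ∧ b ∉ X) x y := by
  intro X hX x y hx hy
  have hN1 : 1 ≤ N := by rw [hN]; exact Nat.one_le_pow _ _ (by norm_num)
  have h2N : 2 ≤ 2 * N := by omega
  -- every part retains a surviving vertex
  have surv : ∀ ℓ : Fin (2 * N), ∃ v : V, part v = ℓ ∧ v ∉ X := by
    intro ℓ
    by_contra h
    push_neg at h
    have hsub : {v | part v = ℓ} ⊆ X := fun v hv => h v hv
    have := Set.ncard_le_ncard hsub X.toFinite
    rw [hpart ℓ] at this
    omega
  -- descend along backward arcs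
  have descend : ∀ n (a : V), (part a : ℕ) = n → a ∉ X → ∀ b : V, b ∉ X →
      (part b : ℕ) < n → Relation.ReflTransGen (fun a b => A a b ∧ a ∉ X ∧ b ∉ X) a b := by
    intro n
    induction n with
    | zero => intro a _ _ b _ hb; omega
    | succ n ih =>
      intro a ha haX b hbX hb
      by_cases h : (part b : ℕ) = n
      · exact Relation.ReflTransGen.single ⟨hback a b (by omega), haX, hbX⟩
      · have hn : n < 2 * N := by have := (part a).isLt; omega
        obtain ⟨c, hc, hcX⟩ := surv ⟨n, hn⟩
        have hc' : (part c : ℕ) = n := by rw [hc]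
        exact Relation.ReflTransGen.head ⟨hback a c (by omega), haX, hcX⟩
          (ih c hc' hcX b hbX (by omega))
  by_cases hxy : x = y
  · exact hxy ▸ Relation.ReflTransGen.refl
  -- pick surviving f j from an injective family
  have pick : ∀ f : Fin k → V, Function.Injective f → ∃ j, f j ∉ X := by
    intro f hf
    by_contra h
    push_neg at h
    have hsub : Set.range f ⊆ X := by rintro _ ⟨j, rfl⟩; exact h j
    have := Set.ncard_le_ncard hsub X.toFinite
    have hr : (Set.range f).ncard = k := by
      rw [← Set.image_univ, Set.ncard_image_of_injective _ hf, Set.ncard_univ]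
      simp
    omega
  -- u : surviving vertex in part 0 reachable from x
  obtain ⟨u, hu0, huX, hxu⟩ : ∃ u : V, (part u : ℕ) = 0 ∧ u ∉ X ∧
      Relation.ReflTransGen (fun a b => A a b ∧ a ∉ X ∧ b ∉ X) x u := by
    by_cases h0 : (part x : ℕ) = 0
    · exact ⟨x, h0, hx, Relation.ReflTransGen.refl⟩
    · obtain ⟨u, hu, huX⟩ := surv ⟨0, by omega⟩
      have hu' : (part u : ℕ) = 0 := by rw [hu]
      exact ⟨u, hu', huX, descend _ x rfl hx u huX (by omega)⟩
  -- w : surviving vertex in part 2N-1 from which y is reachable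
  obtain ⟨w, hwt, hwX, hwy⟩ : ∃ w : V, (part w : ℕ) = 2 * N - 1 ∧ w ∉ X ∧
      Relation.ReflTransGen (fun a b => A a b ∧ a ∉ X ∧ b ∉ X) w y := by
    by_cases ht : (part y : ℕ) = 2 * N - 1
    · exact ⟨y, ht, hy, Relation.ReflTransGen.refl⟩
    · obtain ⟨w, hw, hwX⟩ := surv ⟨2 * N - 1, by omega⟩
      have hw' : (part w : ℕ) = 2 * N - 1 := by rw [hw]
      have hylt : (part y : ℕ) < 2 * N - 1 := by have := (part y).isLt; omega
      exact ⟨w, hw', hwX, descend _ w rfl hwX y hy (by omega)⟩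
  obtain ⟨f, hfinj, hf⟩ := hout u hu0
  obtain ⟨j, hjX⟩ := pick f hfinj
  set v := f j with hv
  have hvN : N ≤ (part v : ℕ) := (hf j).2
  obtain ⟨g, hginj, hg⟩ := hin w hwt
  obtain ⟨j', hj'X⟩ := pick g hginj
  set z := g j' with hz
  have hzN : (part z : ℕ) < N := (hg j').2
  have h1 : Relation.ReflTransGen (fun a b => A a b ∧ a ∉ X ∧ b ∉ X) u v :=
    Relation.ReflTransGen.single ⟨(hf j).1, huX, hjX⟩
  have h2 : Relation.ReflTransGen (fun a b => A a b ∧ a ∉ X ∧ b ∉ X) v z :=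
    descend _ v rfl hjX z hj'X (by omega)
  have h3 : Relation.ReflTransGen (fun a b => A a b ∧ a ∉ X ∧ b ∉ X) z w :=
    Relation.ReflTransGen.single ⟨(hg j').1, hj'X, hwX⟩
  exact hxu.trans (h1.trans (h2.trans (h3.trans hwy)))
end

section
/- In the digraph D_k of Proposition 1.3, every directed cycle C satisfies |C| = Σ_{e ∈ F(C)} L(e), where F(C) is the set of forward arcs used by C and L(e) is the prescribed length of the forward arc e. Consequently, two directed cycles in D_k have equal length if and only if they use the same set of forward arcs, and since the multiset of forward-arc lengths has pairwise distinct subset sums, D_k contains no two arc-disjoint directed cycles of equal length. -/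
open Finset

theorem eq_sum_filter_rise_add_one {h : ℕ → ℕ} {P : ℕ → Prop} [DecidablePred P] {n : ℕ}
    (hclosed : h n = h 0) (hdown : ∀ i < n, ¬ P i → h (i + 1) + 1 = h i)
    (hup : ∀ i < n, P i → h i ≤ h (i + 1)) :
    n = ∑ i ∈ (range n).filter P, (h (i + 1) - h i + 1) := by
  have htotal : ∑ i ∈ range n, ((h (i + 1) : ℤ) - h i + 1) = n := by
    rw [sum_add_distrib, sum_range_sub (fun i => (h i : ℤ)), hclosed]
    simp
  -- a descending step contributes `0` to the summand `h (i + 1) - h i + 1`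
  have hfilter : ∑ i ∈ (range n).filter P, ((h (i + 1) : ℤ) - h i + 1)
      = ∑ i ∈ range n, ((h (i + 1) : ℤ) - h i + 1) := by
    refine sum_filter_of_ne fun i hi hne => ?_
    by_contra hP
    have := hdown i (mem_range.1 hi) hP
    omega
  have hcast : ((∑ i ∈ (range n).filter P, (h (i + 1) - h i + 1) : ℕ) : ℤ)
      = ∑ i ∈ (range n).filter P, ((h (i + 1) : ℤ) - h i + 1) := by
    push_cast
    refine sum_congr rfl fun i hi => ?_
    obtain ⟨hi, hP⟩ := mem_filter.1 hi
    rw [Nat.cast_sub (hup i (mem_range.1 hi) hP)]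
  omega

section Dicycle

variable {V : Type*} [DecidableEq V]

/-- The set `F(C)` of forward arcs used by the cycle `c` of length `n`. -/
def forwardArcs (F : V → V → Prop) [DecidableRel F] (n : ℕ) (c : ℕ → V) : Finset (V × V) :=
  ((range n).filter fun i => F (c i) (c (i + 1))).image fun i => (c i, c (i + 1))

variable {F : V → V → Prop} [DecidableRel F] {n : ℕ} {c : ℕ → V}

theorem mem_forwardArcs {p : V × V} :
    p ∈ forwardArcs F n c ↔ ∃ i < n, F (c i) (c (i + 1)) ∧ (c i, c (i + 1)) = p := by
  simp [forwardArcs, and_assoc]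

theorem forwardArcs_rel {p : V × V} (hp : p ∈ forwardArcs F n c) : F p.1 p.2 := by
  obtain ⟨i, -, hF, rfl⟩ := mem_forwardArcs.1 hp
  exact hF

namespace IsDicycle

variable {A : V → V → Prop}

theorem sum_forwardArcs {M : Type*} [AddCommMonoid M] (hc : IsDicycle A n c) (g : V × V → M) :
    ∑ p ∈ forwardArcs F n c, g p
      = ∑ i ∈ (range n).filter (fun i => F (c i) (c (i + 1))), g (c i, c (i + 1)) := by
  refine sum_image fun i hi j hj hij => ?_
  simp only [coe_filter, Set.mem_ofPred_eq, mem_range] at hi hj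
  exact hc.2.2.2 i j hi.1 hj.1 (congrArg Prod.fst hij)

theorem length_eq_sum_forwardArcs (hc : IsDicycle A n c) (part : V → ℕ)
    (hback : ∀ u v, A u v → ¬ F u v → part v + 1 = part u)
    (hfwd : ∀ u v, F u v → part u ≤ part v) :
    n = ∑ p ∈ forwardArcs F n c, (part p.2 - part p.1 + 1) := by
  rw [hc.sum_forwardArcs]
  obtain ⟨-, harc, hper, -⟩ := hc
  refine eq_sum_filter_rise_add_one (h := fun i => part (c i)) ?_
    (fun i _ hF => hback _ _ (harc i) hF) (fun i _ hF => hfwd _ _ hF)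
  exact congrArg part (by simpa using hper 0)

theorem forwardArcs_nonempty (hc : IsDicycle A n c) (part : V → ℕ)
    (hback : ∀ u v, A u v → ¬ F u v → part v + 1 = part u)
    (hfwd : ∀ u v, F u v → part u ≤ part v) :
    (forwardArcs F n c).Nonempty := by
  rw [nonempty_iff_ne_empty]
  intro hempty
  have hlen := hc.length_eq_sum_forwardArcs part hback hfwd
  rw [hempty, sum_empty] at hlen
  have := hc.1
  omega

end IsDicycle

end Dicycle

theorem stmt12_general {V : Type*} [DecidableEq V] (A F : V → V → Prop) [DecidableRel F]
    (part : V → ℕ)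
    (hback : ∀ u v, A u v → ¬ F u v → part v + 1 = part u)
    (hfwd : ∀ u v, F u v → part u < part v) :
    (∀ (n : ℕ) (c : ℕ → V), IsDicycle A n c →
      n = ∑ p ∈ ((Finset.range n).filter (fun i => F (c i) (c (i + 1)))).image
            (fun i => (c i, c (i + 1))), (part p.2 - part p.1 + 1)) ∧
    ((∀ T₁ T₂ : Finset (V × V), (∀ p ∈ T₁, F p.1 p.2) → (∀ p ∈ T₂, F p.1 p.2) →
        ∑ p ∈ T₁, (part p.2 - part p.1 + 1) = ∑ p ∈ T₂, (part p.2 - part p.1 + 1) →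
        T₁ = T₂) →
      ∀ (n : ℕ) (c c' : ℕ → V), IsDicycle A n c → IsDicycle A n c' →
        ∃ i j, i < n ∧ j < n ∧ (c i, c (i + 1)) = (c' j, c' (j + 1))) := by
  have hfwd' : ∀ u v, F u v → part u ≤ part v := fun u v h => (hfwd u v h).le
  refine ⟨fun n c hc => hc.length_eq_sum_forwardArcs part hback hfwd',
    fun hdist n c c' hc hc' => ?_⟩
  have hsame : forwardArcs F n c = forwardArcs F n c' :=
    hdist _ _ (fun _ => forwardArcs_rel) (fun _ => forwardArcs_rel) <| by
      rw [← hc.length_eq_sum_forwardArcs part hback hfwd',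
        ← hc'.length_eq_sum_forwardArcs part hback hfwd']
  obtain ⟨p, hp⟩ := hc.forwardArcs_nonempty part hback hfwd'
  obtain ⟨i, hi, -, rfl⟩ := mem_forwardArcs.1 hp
  obtain ⟨j, hj, -, hij⟩ := mem_forwardArcs.1 (hsame ▸ hp)
  exact ⟨i, j, hi, hj, hij.symm⟩

/-- In the digraph `D_k` (abstracted: vertices carry a level `part`, every
non-forward arc descends by exactly one level, every forward arc `(u,v)` ascends and has
prescribed length `L(u,v) = part v − part u + 1`), every directed cycle `C` satisfies
`|C| = Σ_{e ∈ F(C)} L(e)`, where `F(C)` is the set of forward arcs used by `C`.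
Consequently, if the forward-arc lengths have pairwise distinct subset sums, then no two
directed cycles of equal length are arc-disjoint: they share an arc. -/
theorem stmt12 {V : Type*} [DecidableEq V] (A F : V → V → Prop) [DecidableRel F]
    (part : V → ℕ)
    (hFA : ∀ u v, F u v → A u v)
    (hback : ∀ u v, A u v → ¬ F u v → part v + 1 = part u)
    (hfwd : ∀ u v, F u v → part u < part v) :
    (∀ (n : ℕ) (c : ℕ → V), IsDicycle A n c →
      n = ∑ p ∈ ((Finset.range n).filter (fun i => F (c i) (c (i + 1)))).image
            (fun i => (c i, c (i + 1))), (part p.2 - part p.1 + 1)) ∧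
    ((∀ T₁ T₂ : Finset (V × V), (∀ p ∈ T₁, F p.1 p.2) → (∀ p ∈ T₂, F p.1 p.2) →
        ∑ p ∈ T₁, (part p.2 - part p.1 + 1) = ∑ p ∈ T₂, (part p.2 - part p.1 + 1) →
        T₁ = T₂) →
      ∀ (n : ℕ) (c c' : ℕ → V), IsDicycle A n c → IsDicycle A n c' →
        ∃ i j, i < n ∧ j < n ∧ (c i, c (i + 1)) = (c' j, c' (j + 1))) :=
  stmt12_general A F part hback hfwd
end

section
/- For every k ≥ 1 there exists a strongly k-vertex-connected digraph containing no two arc-disjoint directed cycles of equal length (and hence no two vertex-disjoint directed cycles of equal length). -/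
/-!
The digraph `D_k` has `2N` layers of `k` vertices (`N = 4^{k²}`), all arcs from each layer to the
one below, and `2k²` forward arcs, the `e`-th of which climbs `N + 2^e - 1` layers. Summing
`1 + (change of layer)` along a cycle, backward arcs contribute `0`, so the length of a cycle is
`∑ (N + 2^e)` over the forward arcs it uses. As `∑ 2^e < N`, this sum determines the set of forward
arcs used, so two cycles of equal length use the same nonempty set of them. Deleting fewer than `k`
vertices leaves a survivor in every layer and among the tails (heads) of any `k` forward arcs with
distinct tails (heads), which is enough to route from any survivor down to the bottom layer, up a
forward arc, down again and up a second forward arc to any survivor of the top layer.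
-/

open Finset Function Relation

section General

variable {V W : Type*} {A : V → V → Prop}

def IsStronglyVertexConnected (A : V → V → Prop) (k : ℕ) : Prop :=
  ∀ X : Set V, X.ncard ≤ k - 1 → ∀ x y, x ∉ X → y ∉ X →
    ReflTransGen (fun a b => A a b ∧ a ∉ X ∧ b ∉ X) x y

def EqualLengthDicyclesShareArc (A : V → V → Prop) : Prop :=
  ∀ (m : ℕ) (c c' : ℕ → V), IsDicycle A m c → IsDicycle A m c' →
    ∃ i j, i < m ∧ j < m ∧ (c i, c (i + 1)) = (c' j, c' (j + 1))

theorem IsStronglyVertexConnected.comap {k : ℕ} (h : IsStronglyVertexConnected A k)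
    (e : W ≃ V) : IsStronglyVertexConnected (fun a b => A (e a) (e b)) k := by
  intro X hX x y hx hy
  have hreach := h (e '' X) (by rwa [Set.ncard_image_of_injective X e.injective]) (e x) (e y)
    (by simpa) (by simpa)
  rw [e.image_eq_preimage_symm] at hreach
  simpa [onFun] using hreach.lift (p := fun a b => A (e a) (e b) ∧ a ∉ X ∧ b ∉ X) e.symm
    fun a b hab => by simpa [onFun] using hab

theorem IsDicycle.comap {f : W → V} (hf : Injective f) {m : ℕ} {c : ℕ → W}
    (hc : IsDicycle (fun a b => A (f a) (f b)) m c) : IsDicycle A m (f ∘ c) :=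
  ⟨hc.1, hc.2.1, fun i => congrArg f (hc.2.2.1 i),
    fun i j hi hj hij => hc.2.2.2 i j hi hj (hf hij)⟩

theorem EqualLengthDicyclesShareArc.comap (h : EqualLengthDicyclesShareArc A) {f : W → V}
    (hf : Injective f) : EqualLengthDicyclesShareArc fun a b => A (f a) (f b) := by
  intro m c c' hc hc'
  obtain ⟨i, j, hi, hj, hij⟩ := h m _ _ (hc.comap hf) (hc'.comap hf)
  simp only [comp_apply, Prod.ext_iff] at hij
  exact ⟨i, j, hi, hj, Prod.ext (hf hij.1) (hf hij.2)⟩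

theorem IsDicycle.length_eq_sum {m : ℕ} {c : ℕ → V} (hc : IsDicycle A m c) (h : V → ℤ) :
    (m : ℤ) = ∑ i ∈ range m, (1 + h (c (i + 1)) - h (c i)) := by
  have hper : c m = c 0 := by simpa using hc.2.2.1 0
  simp only [add_sub_assoc, sum_add_distrib, sum_range_sub (fun i => h (c i)), hper, sub_self]
  simp

theorem exists_apply_notMem_of_ncard_lt [Finite V] {k : ℕ} {X : Set V} (hX : X.ncard < k)
    {f : Fin k → V} (hf : Injective f) : ∃ a, f a ∉ X := by
  obtain ⟨_, ⟨a, rfl⟩, ha⟩ := Set.exists_mem_notMem_of_ncard_lt_ncard (s := X) (t := Set.range f)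
    (by rwa [Set.ncard_range_of_injective hf, Nat.card_fin])
  exact ⟨a, ha⟩

theorem Finset.sum_const_add_injective {ι : Type*} {w : ι → ℕ} {N : ℕ}
    (hw : Injective fun S : Finset ι => ∑ t ∈ S, w t) (hN : ∀ S : Finset ι, ∑ t ∈ S, w t < N) :
    Injective fun S : Finset ι => ∑ t ∈ S, (N + w t) := by
  intro S S' h
  have hmod := congrArg (· % N) h
  simp only [sum_add_distrib, sum_const, smul_eq_mul, Nat.mul_add_mod_of_lt (hN _)] at hmod
  exact hw hmod

end General

namespace WitnessDigraph

abbrev FwdArc (k : ℕ) := Bool × Fin k × Fin k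

def N (k : ℕ) : ℕ := 2 ^ Fintype.card (FwdArc k)

abbrev Vertex (k : ℕ) := Fin (2 * N k) × Fin k

variable {k : ℕ}

noncomputable def index : FwdArc k ↪ ℕ :=
  (Fintype.equivFin (FwdArc k)).toEmbedding.trans Fin.valEmbedding

noncomputable def weight (t : FwdArc k) : ℕ := 2 ^ index t

theorem N_pos : 0 < N k := Nat.two_pow_pos _

theorem one_le_weight (t : FwdArc k) : 1 ≤ weight t := Nat.one_le_two_pow

theorem sum_weight_eq (S : Finset (FwdArc k)) :
    ∑ t ∈ S, weight t = ∑ i ∈ S.map index, 2 ^ i :=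
  (sum_map S index _).symm

theorem sum_weight_lt (S : Finset (FwdArc k)) : ∑ t ∈ S, weight t < N k := by
  rw [sum_weight_eq]
  refine Nat.geomSum_lt le_rfl fun i hi => ?_
  obtain ⟨t, -, rfl⟩ := mem_map.1 hi
  exact (Fintype.equivFin _ t).isLt

theorem weight_lt (t : FwdArc k) : weight t < N k := by
  simpa using sum_weight_lt {t}

theorem sum_weight_injective : Injective fun S : Finset (FwdArc k) => ∑ t ∈ S, weight t :=
  fun S S' h => map_injective index <| geomSum_injective le_rfl <| by
    simpa only [sum_weight_eq] using h

theorem sum_N_add_weight_injective :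
    Injective fun S : Finset (FwdArc k) => ∑ t ∈ S, (N k + weight t) :=
  sum_const_add_injective sum_weight_injective sum_weight_lt

/-- `false`-arcs leave layer `0`, `true`-arcs enter the top layer `2N - 1`; the arc `t` climbs
`N + weight t - 1` layers. -/
noncomputable def tailLayer (t : FwdArc k) : ℕ := if t.1 then N k - weight t else 0

noncomputable def headLayer (t : FwdArc k) : ℕ :=
  if t.1 then 2 * N k - 1 else N k + weight t - 1

theorem tailLayer_add (t : FwdArc k) : tailLayer t + (N k + weight t) = headLayer t + 1 := by
  have := weight_lt t
  have := one_le_weight t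
  unfold tailLayer headLayer
  split <;> omega

theorem headLayer_lt (t : FwdArc k) : headLayer t < 2 * N k := by
  have := weight_lt t
  unfold headLayer
  split <;> omega

noncomputable def tail (t : FwdArc k) : Vertex k :=
  (⟨tailLayer t, by have := tailLayer_add t; have := headLayer_lt t; omega⟩, t.2.1)

noncomputable def head (t : FwdArc k) : Vertex k := (⟨headLayer t, headLayer_lt t⟩, t.2.2)

/-- The digraph `D_k`: vertex `(ℓ, r)` is the `r`-th vertex of the part `V_ℓ`. -/
def Adj (u v : Vertex k) : Prop := (u.1 : ℕ) = v.1 + 1 ∨ ∃ t, u = tail t ∧ v = head t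

theorem tail_head_injective : Injective fun t : FwdArc k => (tail t, head t) := by
  rintro ⟨e, a, b⟩ ⟨e', a', b'⟩ h
  have := weight_lt (e, a, b)
  have := weight_lt (e', a', b')
  cases e <;> cases e' <;>
    simp_all [tail, head, tailLayer, headLayer, Prod.ext_iff, Fin.ext_iff] <;> omega

theorem not_adj_self (v : Vertex k) : ¬ Adj v v := by
  rintro (h | ⟨t, rfl, h⟩)
  · omega
  · have hlayer := congrArg (fun v : Vertex k => (v.1 : ℕ)) h
    have := tailLayer_add t
    have := one_le_weight t
    have := N_pos (k := k)
    simp only [tail, head] at hlayer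
    omega

section Connectivity

variable {X : Set (Vertex k)}

def AdjOutside (X : Set (Vertex k)) (a b : Vertex k) : Prop := Adj a b ∧ a ∉ X ∧ b ∉ X

theorem exists_notMem_layer (hX : X.ncard < k) (ℓ : Fin (2 * N k)) : ∃ r, (ℓ, r) ∉ X :=
  exists_apply_notMem_of_ncard_lt hX (Prod.mk_right_injective ℓ)

theorem reach_of_layer_lt (hX : X.ncard < k) {u v : Vertex k} (hu : u ∉ X) (hv : v ∉ X)
    (h : (v.1 : ℕ) < u.1) : ReflTransGen (AdjOutside X) u v := by
  obtain ⟨d, hd⟩ := Nat.exists_eq_add_of_lt h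
  induction d generalizing u with
  | zero => exact ReflTransGen.single ⟨Or.inl hd, hu, hv⟩
  | succ d ih =>
    obtain ⟨r, hr⟩ := exists_notMem_layer hX ⟨v.1 + d + 1, by omega⟩
    exact ReflTransGen.head ⟨Or.inl (by simp [hd]; omega), hu, hr⟩ (ih hr (by simp) rfl)

theorem reach_of_tail_head (t : FwdArc k) (ht : tail t ∉ X) (hh : head t ∉ X) :
    ReflTransGen (AdjOutside X) (tail t) (head t) :=
  ReflTransGen.single ⟨Or.inr ⟨t, rfl, rfl⟩, ht, hh⟩

def bottomLayer : Fin (2 * N k) := ⟨0, by have := N_pos (k := k); omega⟩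

def topLayer : Fin (2 * N k) := ⟨2 * N k - 1, by have := N_pos (k := k); omega⟩

theorem reach_top (hX : X.ncard < k) {x : Vertex k} (hx : x ∉ X) {r : Fin k}
    (hr : (topLayer, r) ∉ X) : ReflTransGen (AdjOutside X) x (topLayer, r) := by
  obtain ⟨a, ha, hxa⟩ :
      ∃ a, (bottomLayer, a) ∉ X ∧ ReflTransGen (AdjOutside X) x (bottomLayer, a) := by
    by_cases hx0 : x.1 = bottomLayer
    · have hx' : x = (bottomLayer, x.2) := Prod.ext hx0 rfl
      exact ⟨x.2, hx' ▸ hx, hx' ▸ ReflTransGen.refl⟩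
    · obtain ⟨a, ha⟩ := exists_notMem_layer hX bottomLayer
      refine ⟨a, ha, reach_of_layer_lt hX hx ha ?_⟩
      simpa [bottomLayer, Nat.pos_iff_ne_zero, Fin.ext_iff] using hx0
  obtain ⟨b, hb⟩ := exists_apply_notMem_of_ncard_lt hX
    (f := fun b => head (false, a, b)) fun _ _ h => congrArg Prod.snd h
  obtain ⟨a', ha'⟩ := exists_apply_notMem_of_ncard_lt hX
    (f := fun a' => tail (true, a', r)) fun _ _ h => congrArg Prod.snd h
  have hup := reach_of_tail_head (false, a, b) ha hb
  have hdown := reach_of_layer_lt hX hb ha' (by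
    have := one_le_weight (false, a, b)
    have := one_le_weight (true, a', r)
    have := weight_lt (true, a', r)
    simp only [tail, head, tailLayer, headLayer, if_true, Bool.false_eq_true, if_false]
    omega)
  exact hxa.trans (hup.trans (hdown.trans (reach_of_tail_head _ ha' hr)))

theorem reach (hX : X.ncard < k) {x y : Vertex k} (hx : x ∉ X) (hy : y ∉ X) :
    ReflTransGen (AdjOutside X) x y := by
  by_cases hytop : y.1 = topLayer
  · have hy' : y = (topLayer, y.2) := Prod.ext hytop rfl
    rw [hy'] at hy ⊢
    exact reach_top hX hx hy
  · obtain ⟨r, hr⟩ := exists_notMem_layer hX topLayer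
    refine (reach_top hX hx hr).trans (reach_of_layer_lt hX hr hy ?_)
    have := y.1.isLt
    have : (y.1 : ℕ) ≠ topLayer := fun h => hytop (Fin.ext h)
    simp only [topLayer] at this ⊢
    omega

end Connectivity

section Cycles

variable {m : ℕ} {c : ℕ → Vertex k}

open Classical in
noncomputable def usedArcs (m : ℕ) (c : ℕ → Vertex k) : Finset (FwdArc k) :=
  univ.filter fun t => ∃ i < m, c i = tail t ∧ c (i + 1) = head t

theorem layer_step_of_adj {u v : Vertex k} (h : Adj u v) :
    1 + (v.1 : ℤ) - u.1 = 0 ∨ ∃ t, u = tail t ∧ v = head t := by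
  rcases h with h | h
  · left; omega
  · exact Or.inr h

theorem length_eq_sum_usedArcs (hc : IsDicycle Adj m c) :
    m = ∑ t ∈ usedArcs m c, (N k + weight t) := by
  classical
  set step := fun i => 1 + ((c (i + 1)).1 : ℤ) - (c i).1
  let Fwd := fun i => ∃ t, c i = tail t ∧ c (i + 1) = head t
  have hback : ∀ i ∈ (range m).filter (¬ Fwd ·), step i = 0 := fun i hi =>
    (layer_step_of_adj (hc.2.1 i)).resolve_right (mem_filter.1 hi).2
  have hfwd :
      ∑ i ∈ (range m).filter Fwd, step i = ∑ t ∈ usedArcs m c, ((N k + weight t : ℕ) : ℤ) := by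
    refine sum_bij (fun i hi => (mem_filter.1 hi).2.choose) ?_ ?_ ?_ ?_
    · intro i hi
      obtain ⟨hi, hFwd⟩ := mem_filter.1 hi
      exact mem_filter.2 ⟨mem_univ _, i, mem_range.1 hi, hFwd.choose_spec⟩
    · intro i hi j hj hij
      have hti := (mem_filter.1 hi).2.choose_spec.1
      have htj := (mem_filter.1 hj).2.choose_spec.1
      rw [hij] at hti
      exact hc.2.2.2 i j (mem_range.1 (mem_filter.1 hi).1) (mem_range.1 (mem_filter.1 hj).1)
        (hti.trans htj.symm)
    · intro t ht
      obtain ⟨i, hi, hti, hhi⟩ := (mem_filter.1 ht).2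
      have hFwd : Fwd i := ⟨t, hti, hhi⟩
      exact ⟨i, mem_filter.2 ⟨mem_range.2 hi, hFwd⟩, tail_head_injective <|
        Prod.ext (hFwd.choose_spec.1.symm.trans hti) (hFwd.choose_spec.2.symm.trans hhi)⟩
    · intro i hi
      obtain ⟨ht, hh⟩ := (mem_filter.1 hi).2.choose_spec
      generalize (mem_filter.1 hi).2.choose = t at ht hh ⊢
      have := tailLayer_add t
      simp only [step, ht, hh, tail, head]
      omega
  have := hc.length_eq_sum fun v => (v.1 : ℤ)
  rw [← sum_filter_add_sum_filter_not _ Fwd, sum_eq_zero hback, add_zero] at this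
  exact_mod_cast this.trans hfwd

theorem equalLengthDicyclesShareArc : EqualLengthDicyclesShareArc (Adj (k := k)) := by
  intro m c c' hc hc'
  have hused : usedArcs m c = usedArcs m c' :=
    sum_N_add_weight_injective
      ((length_eq_sum_usedArcs hc).symm.trans (length_eq_sum_usedArcs hc'))
  obtain ⟨t, ht⟩ : (usedArcs m c).Nonempty :=
    nonempty_of_sum_ne_zero <| by have := hc.1; rw [← length_eq_sum_usedArcs hc]; omega
  obtain ⟨i, hi, hci, hci'⟩ := (mem_filter.1 ht).2
  obtain ⟨j, hj, hcj, hcj'⟩ := (mem_filter.1 (hused ▸ ht)).2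
  exact ⟨i, j, hi, hj, by rw [hci, hci', hcj, hcj']⟩

end Cycles

theorem isStronglyVertexConnected (hk : 1 ≤ k) : IsStronglyVertexConnected (Adj (k := k)) k :=
  fun _ hX _ _ hx hy => reach (by omega) hx hy

end WitnessDigraph

/-- For every `k ≥ 1` there exists a strongly `k`-vertex-connected
(finite, loopless) digraph containing no two arc-disjoint directed cycles of equal
length: any two directed cycles of the same length share an arc. -/
theorem stmt13 (k : ℕ) (hk : 1 ≤ k) :
    ∃ (n : ℕ) (A : Fin n → Fin n → Prop),
      k + 1 ≤ n ∧ (∀ v, ¬ A v v) ∧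
      (∀ X : Set (Fin n), X.ncard ≤ k - 1 → ∀ x y, x ∉ X → y ∉ X →
        Relation.ReflTransGen (fun a b => A a b ∧ a ∉ X ∧ b ∉ X) x y) ∧
      ∀ (m : ℕ) (c c' : ℕ → Fin n), IsDicycle A m c → IsDicycle A m c' →
        ∃ i j, i < m ∧ j < m ∧ (c i, c (i + 1)) = (c' j, c' (j + 1)) := by
  open WitnessDigraph in
  let e := (finProdFinEquiv (m := 2 * N k) (n := k)).symm
  refine ⟨2 * N k * k, fun a b => Adj (e a) (e b), ?_, fun v => not_adj_self (e v),
    (isStronglyVertexConnected hk).comap e, equalLengthDicyclesShareArc.comap e.injective⟩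
  have := N_pos (k := k)
  nlinarith
end

section
/- For every k ≥ 1 there exists a digraph F_k with minimum out-degree exactly k and directed tree-width equal to 1. Concretely, F_k is obtained from the complete k-ary out-arborescence T_k of depth k by adding, for every leaf u and every ancestor v of u in T_k (including the root), the arc (u, v); then every vertex of F_k has out-degree at least k, and F_k admits a directed tree-decomposition of width 1. -/
/-- Reachability in `D − Z` by a directed walk avoiding `Z`. -/
def ReachAvoid {V : Type*} (A : V → V → Prop) (Z : Set V) (x y : V) : Prop :=
  Relation.ReflTransGen (fun a b => A a b ∧ a ∉ Z ∧ b ∉ Z) x y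

/-- `S ⊆ V \ Z` is `Z`-normal: every directed walk in `D − Z` starting and ending
in `S` stays in `S`. -/
def IsZNormal {V : Type*} (A : V → V → Prop) (Z S : Set V) : Prop :=
  Disjoint S Z ∧ ∀ x y z : V, x ∈ S → y ∈ S → z ∉ S →
    ¬(ReachAvoid A Z x z ∧ ReachAvoid A Z z y)

/-- A directed tree-decomposition `(T, β, γ)` of the digraph with arc relation `A`:
`T` is an out-arborescence (every node reachable from the root, every non-root node
has a unique parent, the root has none), the bags `β t` partition the vertex set into
nonempty sets, and for every tree-arc `(s,t)` the union of the bags at or below `t`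
is `γ s t`-normal. -/
structure DirTreeDecomp (V : Type) (A : V → V → Prop) where
  τ : Type
  arc : τ → τ → Prop
  root : τ
  reach_root : ∀ t, Relation.ReflTransGen arc root t
  parent_unique : ∀ t, t ≠ root → ∃! s, arc s t
  root_no_parent : ∀ s, ¬ arc s root
  β : τ → Set V
  γ : τ → τ → Set V
  β_nonempty : ∀ t, (β t).Nonempty
  β_disjoint : ∀ s t, s ≠ t → Disjoint (β s) (β t)
  β_cover : ∀ v, ∃ t, v ∈ β t
  guard : ∀ s t, arc s t →
    IsZNormal A (γ s t) (⋃ t' ∈ {t' | Relation.ReflTransGen arc t t'}, β t')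

/-- `Γ(t) = β(t) ∪ ⋃ {γ(e) : e incident with t}`. -/
def DirTreeDecomp.Gamma {V : Type} {A : V → V → Prop} (d : DirTreeDecomp V A)
    (t : d.τ) : Set V :=
  d.β t ∪ (⋃ s ∈ {s | d.arc s t}, d.γ s t) ∪ (⋃ s ∈ {s | d.arc t s}, d.γ t s)

/-!
`F_k` is modelled on the lists over `Fin k` of length at most `k`, the children of `l` being
the lists `a :: l`: the root is `[]`, the leaves are the lists of length `k` and the ancestors
of a node are its suffixes. Take `T_k` itself as decomposition tree, with `β t = {t}` and with
`γ` of a tree arc its tail. An arc of `F_k` that enters the subtree below a node `t` must come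
from the parent of `t`: a tree arc can only enter at `t`, and a back arc ending in the subtree
starts at a leaf below its head, hence inside the subtree. So a walk avoiding the parent of `t`
that has left the subtree never returns, which is the normality condition, and every
`Γ(t) = β(t) ∪ γ(in-arc) ∪ γ(out-arcs)` is `{t, parent t}`.
-/

theorem not_mem_of_reachAvoid {V : Type*} {A : V → V → Prop} {Z S : Set V}
    (hentry : ∀ u w, A u w → u ∉ S → w ∈ S → u ∈ Z) {x y : V}
    (hxy : ReachAvoid A Z x y) (hx : x ∉ S) : y ∉ S := by
  induction hxy with
  | refl => exact hx
  | tail _ hbc ih => exact fun hc => hbc.2.1 (hentry _ _ hbc.1 ih hc)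

theorem isZNormal_of_forall_entering_mem {V : Type*} {A : V → V → Prop} {Z S : Set V}
    (hSZ : Disjoint S Z) (hentry : ∀ u w, A u w → u ∉ S → w ∈ S → u ∈ Z) :
    IsZNormal A Z S :=
  ⟨hSZ, fun _ _ _ _ hy hz ⟨_, hzy⟩ => not_mem_of_reachAvoid hentry hzy hz hy⟩

abbrev KaryNode (k : ℕ) := {l : List (Fin k) // l.length ≤ k}

noncomputable instance (k : ℕ) : Fintype (KaryNode k) :=
  (List.finite_length_le (Fin k) k).fintype

namespace KaryNode

variable {k : ℕ}

def root : KaryNode k := ⟨[], Nat.zero_le k⟩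

def parent (t : KaryNode k) : KaryNode k := ⟨t.1.tail, by simp only [List.length_tail]; omega⟩

def IsChild (s t : KaryNode k) : Prop := ∃ a, t.1 = a :: s.1

def Arc (v w : KaryNode k) : Prop := IsChild v w ∨ (v.1.length = k ∧ w ≠ v ∧ w.1 <:+ v.1)

theorem isChild_iff {s t : KaryNode k} : IsChild s t ↔ t ≠ root ∧ s = parent t := by
  obtain ⟨t, ht⟩ := t
  cases t with
  | nil => simp [IsChild, root]
  | cons a l => simp [IsChild, root, parent, Subtype.ext_iff, eq_comm]

theorem parent_ne_self {t : KaryNode k} (ht : t ≠ root) : parent t ≠ t := by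
  obtain ⟨t, _⟩ := t
  cases t with
  | nil => simp [root] at ht
  | cons a l => simp [parent, Subtype.ext_iff]

theorem reflTransGen_isChild_iff {s t : KaryNode k} :
    Relation.ReflTransGen IsChild s t ↔ s.1 <:+ t.1 := by
  constructor
  · intro h
    induction h with
    | refl => exact List.suffix_refl _
    | tail _ hbc ih =>
      obtain ⟨a, ha⟩ := hbc
      exact ha ▸ ih.trans (List.suffix_cons a _)
  · obtain ⟨l, hl⟩ := t
    intro h
    induction l with
    | nil => exact (Subtype.ext (List.suffix_nil.mp h) : s = ⟨[], hl⟩) ▸ .refl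
    | cons a l ih =>
      rcases List.suffix_cons_iff.mp h with h | h
      · exact (Subtype.ext h : s = ⟨a :: l, hl⟩) ▸ .refl
      · exact (ih (by simp only [List.length_cons] at hl; omega) h).tail ⟨a, rfl⟩

theorem arc_irrefl (v : KaryNode k) : ¬ Arc v v := by
  rintro (⟨a, ha⟩ | ⟨-, hne, -⟩)
  · simpa using congrArg List.length ha
  · exact hne rfl

theorem eq_of_arc_into_subtree {s t u w : KaryNode k} (hst : IsChild s t) (huw : Arc u w)
    (hu : ¬ t.1 <:+ u.1) (hw : t.1 <:+ w.1) : u = s := by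
  obtain ⟨a, ha⟩ := hst
  rcases huw with ⟨b, hb⟩ | ⟨-, -, hwu⟩
  · rw [hb, List.suffix_cons_iff] at hw
    refine hw.elim (fun h => Subtype.ext ?_) (absurd · hu)
    exact (List.cons.inj (ha.symm.trans h)).2.symm
  · exact absurd (hw.trans hwu) hu

theorem ncard_arc_of_length_lt (v : KaryNode k) (hv : v.1.length < k) :
    {w | Arc v w}.ncard = k := by
  let child : Fin k → KaryNode k := fun a => ⟨a :: v.1, hv⟩
  have hchild : {w | Arc v w} = Set.range child := by
    ext w
    constructor
    · rintro (⟨a, ha⟩ | ⟨hl, -⟩)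
      · exact ⟨a, (Subtype.ext ha).symm⟩
      · omega
    · rintro ⟨a, rfl⟩
      exact Or.inl ⟨a, rfl⟩
  have hinj : Function.Injective child := fun a b hab => (List.cons.inj (congrArg Subtype.val hab)).1
  rw [hchild, Set.ncard_range_of_injective hinj, Nat.card_eq_fintype_card, Fintype.card_fin]

theorem ncard_arc_of_length_eq (v : KaryNode k) (hv : v.1.length = k) :
    {w | Arc v w}.ncard = k := by
  let ancestor : Fin k → KaryNode k := fun i => ⟨v.1.drop (i + 1), by simp only [List.length_drop]; omega⟩
  have hancestor : {w | Arc v w} = Set.range ancestor := by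
    ext w
    constructor
    · rintro (⟨a, ha⟩ | ⟨-, hne, hwv⟩)
      · simpa [ha, hv] using w.2
      · have hlt : w.1.length < k := lt_of_le_of_ne w.2 fun h =>
          hne (Subtype.ext (hwv.eq_of_length (h.trans hv.symm)))
        refine ⟨⟨k - w.1.length - 1, by omega⟩, Subtype.ext ?_⟩
        refine (?_ : _ = _).trans (List.suffix_iff_eq_drop.mp hwv).symm
        simp only [ancestor, hv]
        congr 1
        omega
    · rintro ⟨i, rfl⟩
      refine Or.inr ⟨hv, fun h => ?_, List.drop_suffix _ _⟩
      have := congrArg (fun w : KaryNode k => w.1.length) h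
      simp only [ancestor, List.length_drop] at this
      omega
  have hinj : Function.Injective ancestor := fun i j hij => by
    have := congrArg (fun w : KaryNode k => w.1.length) hij
    simp only [ancestor, List.length_drop] at this
    omega
  rw [hancestor, Set.ncard_range_of_injective hinj, Nat.card_eq_fintype_card, Fintype.card_fin]

theorem ncard_arc (v : KaryNode k) : {w | Arc v w}.ncard = k :=
  (lt_or_eq_of_le v.2).elim (ncard_arc_of_length_lt v) (ncard_arc_of_length_eq v)

def decomp (k : ℕ) : DirTreeDecomp (KaryNode k) Arc where
  τ := KaryNode k
  arc := IsChild
  root := root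
  reach_root _ := reflTransGen_isChild_iff.mpr List.nil_suffix
  parent_unique t ht := ⟨parent t, isChild_iff.mpr ⟨ht, rfl⟩, fun _ hs => (isChild_iff.mp hs).2⟩
  root_no_parent _ hs := (isChild_iff.mp hs).1 rfl
  β t := {t}
  γ s _ := {s}
  β_nonempty t := Set.singleton_nonempty t
  β_disjoint _ _ := Set.disjoint_singleton.mpr
  β_cover v := ⟨v, rfl⟩
  guard s t hst := by
    have hsubtree : ⋃ t' ∈ {t' | Relation.ReflTransGen IsChild t t'}, ({t'} : Set (KaryNode k)) =
        {v | t.1 <:+ v.1} := by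
      ext
      simp [reflTransGen_isChild_iff]
    rw [hsubtree]
    refine isZNormal_of_forall_entering_mem (Set.disjoint_singleton_right.mpr fun hts => ?_)
      fun u w huw hu hw => eq_of_arc_into_subtree hst huw hu hw
    obtain ⟨a, ha⟩ := hst
    simpa [ha] using hts.length_le

theorem mem_decomp_Gamma {t v : KaryNode k} :
    v ∈ (decomp k).Gamma t ↔ v = t ∨ (t ≠ root ∧ v = parent t) := by
  rw [← isChild_iff]
  simp only [DirTreeDecomp.Gamma, decomp, Set.singleton_union, Set.mem_union, Set.mem_insert_iff,
    Set.mem_iUnion, Set.mem_singleton_iff, exists_prop, exists_eq_right', exists_and_right]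
  tauto

theorem decomp_Gamma_subset (t : KaryNode k) : (decomp k).Gamma t ⊆ {t, parent t} :=
  fun _ hv => (mem_decomp_Gamma.mp hv).imp_right And.right

theorem decomp_Gamma_of_ne_root {t : KaryNode k} (ht : t ≠ root) :
    (decomp k).Gamma t = {t, parent t} := by
  ext v
  simp [mem_decomp_Gamma, ht]

theorem ncard_decomp_Gamma_le (t : KaryNode k) : ((decomp k).Gamma t).ncard ≤ 2 :=
  calc ((decomp k).Gamma t).ncard ≤ ({t, parent t} : Set (KaryNode k)).ncard :=
        Set.ncard_le_ncard (decomp_Gamma_subset t)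
    _ ≤ ({parent t} : Set (KaryNode k)).ncard + 1 := Set.ncard_insert_le _ _
    _ = 2 := by rw [Set.ncard_singleton]

end KaryNode

/-- For every `k ≥ 1` there exists a (finite, loopless) digraph `F_k`
with minimum out-degree exactly `k` admitting a directed tree-decomposition of width
exactly `1` (i.e. `max |Γ(t)| − 1 = 1`). -/
theorem stmt14 (k : ℕ) (hk : 1 ≤ k) :
    ∃ (V : Type) (_ : Fintype V) (A : V → V → Prop),
      (∀ v, ¬ A v v) ∧
      (∀ v : V, k ≤ {w | A v w}.ncard) ∧ (∃ v : V, {w | A v w}.ncard = k) ∧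
      ∃ d : DirTreeDecomp V A,
        (∀ t, (d.Gamma t).ncard ≤ 2) ∧ (∃ t, (d.Gamma t).ncard = 2) := by
  let t : KaryNode k := ⟨[⟨0, hk⟩], hk⟩
  have ht : t ≠ KaryNode.root := by simp [t, KaryNode.root]
  refine ⟨KaryNode k, inferInstance, KaryNode.Arc, KaryNode.arc_irrefl,
    fun v => (KaryNode.ncard_arc v).ge, ⟨KaryNode.root, KaryNode.ncard_arc _⟩,
    KaryNode.decomp k, KaryNode.ncard_decomp_Gamma_le, t, ?_⟩
  rw [KaryNode.decomp_Gamma_of_ne_root ht, Set.ncard_pair (KaryNode.parent_ne_self ht).symm]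
end
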